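/- Rural Hospitals / Lone Wolf consequence in the special case of non-binding capacities: if every hospital's capacity is at least the number of residents, then in every stable matching the set of matched residents is the same; in particular, if some stable matching matches all residents, then every stable matching matches all residents. -/

import Mathlib

/-!
When every capacity is at least the number of residents, a hospital's assignees never include
all residents, so a hospital is under-subscribed with respect to any resident it does not hold.
Hence a resident left unmatched by a stable matching would block with every acceptable hospital:
such a resident has no acceptable hospital at all, and is unmatched by every matching that only
uses acceptable pairs.
-/

section Matching

variable {A C : Type*} [Fintype A] [DecidableEq C]

def IsStable (acc : A → C → Prop) (UA : A → C → ℝ) (UC : C → A → ℝ) (q : C → ℕ)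
    (M : A → Option C) : Prop :=
  ∀ a c, acc a c →
    ¬ ((M a = none ∨ ∃ c', M a = some c' ∧ UA a c > UA a c') ∧
      ((Finset.univ.filter (fun a' => M a' = some c)).card < q c ∨
        ∃ a' ∈ Finset.univ.filter (fun a' => M a' = some c), UC c a > UC c a'))

theorem card_filter_eq_some_lt_card {M : A → Option C} {a : A} (ha : M a = none) (c : C) :
    (Finset.univ.filter (fun a' => M a' = some c)).card < Fintype.card A := by
  refine Finset.card_lt_univ_of_notMem (x := a) ?_
  simp [ha]

theorem IsStable.not_acc_of_eq_none {acc : A → C → Prop} {UA : A → C → ℝ} {UC : C → A → ℝ}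
    {q : C → ℕ} {M : A → Option C} (hM : IsStable acc UA UC q M)
    (hq : ∀ c, Fintype.card A ≤ q c) {a : A} (ha : M a = none) (c : C) : ¬ acc a c := fun hac =>
  hM a c hac ⟨Or.inl ha, Or.inl ((card_filter_eq_some_lt_card ha c).trans_le (hq c))⟩

theorem IsStable.isSome_of_isSome {acc : A → C → Prop} {UA : A → C → ℝ} {UC : C → A → ℝ}
    {q : C → ℕ} {M M' : A → Option C} (hM : IsStable acc UA UC q M)
    (hq : ∀ c, Fintype.card A ≤ q c) (hacc' : ∀ a c, M' a = some c → acc a c) {a : A}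
    (ha : (M' a).isSome) : (M a).isSome := by
  obtain ⟨c, hc⟩ := Option.isSome_iff_exists.mp ha
  by_contra hnone
  exact hM.not_acc_of_eq_none hq (Option.not_isSome_iff_eq_none.mp hnone) c (hacc' a c hc)

end Matching

theorem stmt13_general {A C : Type*} [Fintype A] [DecidableEq C]
    (acc : A → C → Prop) (UA : A → C → ℝ) (UC : C → A → ℝ) (q : C → ℕ)
    (hq : ∀ c, Fintype.card A ≤ q c)
    (M₁ M₂ : A → Option C)
    (hacc₁ : ∀ a c, M₁ a = some c → acc a c)
    (hacc₂ : ∀ a c, M₂ a = some c → acc a c)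
    -- stability: no blocking pair
    (hstable₁ : ∀ a c, acc a c →
      ¬ ((M₁ a = none ∨ ∃ c', M₁ a = some c' ∧ UA a c > UA a c') ∧
        ((Finset.univ.filter (fun a' => M₁ a' = some c)).card < q c ∨
          ∃ a' ∈ Finset.univ.filter (fun a' => M₁ a' = some c), UC c a > UC c a')))
    (hstable₂ : ∀ a c, acc a c →
      ¬ ((M₂ a = none ∨ ∃ c', M₂ a = some c' ∧ UA a c > UA a c') ∧
        ((Finset.univ.filter (fun a' => M₂ a' = some c)).card < q c ∨
          ∃ a' ∈ Finset.univ.filter (fun a' => M₂ a' = some c), UC c a > UC c a'))) :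
    (∀ a, (M₁ a).isSome ↔ (M₂ a).isSome) ∧
    ((∀ a, (M₁ a).isSome) → ∀ a, (M₂ a).isSome) := by
  have h₁₂ : ∀ a, (M₁ a).isSome → (M₂ a).isSome := fun _ =>
    IsStable.isSome_of_isSome hstable₂ hq hacc₁
  have h₂₁ : ∀ a, (M₂ a).isSome → (M₁ a).isSome := fun _ =>
    IsStable.isSome_of_isSome hstable₁ hq hacc₂
  exact ⟨fun a => ⟨h₁₂ a, h₂₁ a⟩, fun h a => h₁₂ a (h a)⟩

/-- Rural Hospitals theorem (first part) specialized to
non-binding capacities q_c ≥ |A|: every stable matching matches the same set of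
residents; in particular if some stable matching matches all residents, then so
does every stable matching. -/
theorem stmt13 {A C : Type*} [Fintype A] [DecidableEq C]
    (acc : A → C → Prop) (UA : A → C → ℝ) (UC : C → A → ℝ) (q : C → ℕ)
    (hq : ∀ c, Fintype.card A ≤ q c)
    (hUA : ∀ a, Function.Injective (UA a))
    (hUC : ∀ c, Function.Injective (UC c))
    (M₁ M₂ : A → Option C)
    (hacc₁ : ∀ a c, M₁ a = some c → acc a c)
    (hacc₂ : ∀ a c, M₂ a = some c → acc a c)
    (hcap₁ : ∀ c, (Finset.univ.filter (fun a => M₁ a = some c)).card ≤ q c)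
    (hcap₂ : ∀ c, (Finset.univ.filter (fun a => M₂ a = some c)).card ≤ q c)
    -- stability: no blocking pair
    (hstable₁ : ∀ a c, acc a c →
      ¬ ((M₁ a = none ∨ ∃ c', M₁ a = some c' ∧ UA a c > UA a c') ∧
        ((Finset.univ.filter (fun a' => M₁ a' = some c)).card < q c ∨
          ∃ a' ∈ Finset.univ.filter (fun a' => M₁ a' = some c), UC c a > UC c a')))
    (hstable₂ : ∀ a c, acc a c →
      ¬ ((M₂ a = none ∨ ∃ c', M₂ a = some c' ∧ UA a c > UA a c') ∧
        ((Finset.univ.filter (fun a' => M₂ a' = some c)).card < q c ∨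
          ∃ a' ∈ Finset.univ.filter (fun a' => M₂ a' = some c), UC c a > UC c a'))) :
    (∀ a, (M₁ a).isSome ↔ (M₂ a).isSome) ∧
    ((∀ a, (M₁ a).isSome) → ∀ a, (M₂ a).isSome) :=
  stmt13_general acc UA UC q hq M₁ M₂ hacc₁ hacc₂ hstable₁ hstable₂
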